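/- Let (X_r) be any sequence with X_r = ±1, Δx > 0, a ∈ ℝ, and S_0 = a, S_n = a + (X_1 + ... + X_n)Δx. Define one-sided discrete local times L^±(n, x) := Δx · #{ j : 0 ≤ j < n, S_j = x, S_{j+1} = x ± Δx } for x ∈ a + ℤΔx. Then for any f : ℝ → ℝ and n ≥ 1, T_{x=S_0}^{S_n} f(x)Δx = Σ_{r=1}^{n} f(S_{r-1}) X_r Δx + (1/2) Σ_{x ∈ a+ℤΔx} [ L^+(n,x)(f(x+Δx) − f(x)) + L^−(n,x)(f(x) − f(x−Δx)) ] (discrete Itô–Tanaka formula). The sum over x has only finitely many nonzero terms. -/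

import Mathlib

open scoped Classical
open Finset

noncomputable section

/-- Partial sums `S_n = a + (X_1 + ... + X_n) Δx` of a `±1` sequence. -/
def walk (a dx : ℝ) (X : ℕ → ℤ) (n : ℕ) : ℝ :=
  a + ((∑ i ∈ Finset.range n, X i : ℤ) : ℝ) * dx

/-- Trapezoidal sum `T_{x=a}^{a + k Δx} f(x) Δx`. -/
def trapSum (f : ℝ → ℝ) (a dx : ℝ) (k : ℤ) : ℝ :=
  (k.sign : ℝ) * dx *
    (f a / 2 +
      (∑ j ∈ Finset.range (k.natAbs - 1), f (a + (k.sign : ℝ) * ((j : ℝ) + 1) * dx)) +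
      f (a + (k : ℝ) * dx) / 2)

/-- One-sided (up) discrete local time `L^+(n,x)`. -/
def locPlus (a dx : ℝ) (X : ℕ → ℤ) (n : ℕ) (x : ℝ) : ℝ :=
  dx * ((Finset.range n).filter
    (fun j => walk a dx X j = x ∧ walk a dx X (j + 1) = x + dx)).card

/-- One-sided (down) discrete local time `L^-(n,x)`. -/
def locMinus (a dx : ℝ) (X : ℕ → ℤ) (n : ℕ) (x : ℝ) : ℝ :=
  dx * ((Finset.range n).filter
    (fun j => walk a dx X j = x ∧ walk a dx X (j + 1) = x - dx)).card

/-! Both sides are sums over the steps of the walk. Along `S` the trapezoidal sum telescopes: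
the step `S_j → S_{j+1} = S_j + X_j Δx` adds `X_j Δx (f(S_j) + f(S_{j+1})) / 2`, which is
`f(S_j) X_j Δx` plus half of `X_j Δx (f(S_{j+1}) - f(S_j))`; and the latter is precisely what
the step contributes to the lattice sum, through `L^+` at `x = S_j` if `X_j = 1` and through
`L^-` at `x = S_j` if `X_j = -1`. -/

section TrapezoidalSum

variable (f : ℝ → ℝ) (a dx : ℝ)

theorem trapSum_neg (k : ℤ) : trapSum f a dx (-k) = trapSum f a (-dx) k := by
  simp only [trapSum, Int.sign_neg, Int.natAbs_neg, Int.cast_neg, neg_mul, mul_neg]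

theorem trapSum_natCast_add_one (m : ℕ) :
    trapSum f a dx (m + 1) =
      trapSum f a dx m + dx * (f (a + m * dx) + f (a + (m + 1) * dx)) / 2 := by
  rcases m with _ | m
  · simp only [trapSum]
    norm_num
    ring
  · rw [← Nat.cast_add_one]
    simp only [trapSum, Int.sign_natCast_of_ne_zero (Nat.succ_ne_zero _), Int.natAbs_natCast,
      Nat.add_sub_cancel, sum_range_succ]
    push_cast
    ring_nf

theorem trapSum_add_one (k : ℤ) :
    trapSum f a dx (k + 1) =
      trapSum f a dx k + dx * (f (a + k * dx) + f (a + (k + 1) * dx)) / 2 := by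
  cases k with
  | ofNat m => exact_mod_cast trapSum_natCast_add_one f a dx m
  | negSucc m =>
    have h := trapSum_natCast_add_one f a (-dx) m
    rw [← trapSum_neg, ← trapSum_neg] at h
    rw [Int.negSucc_eq, show -((m : ℤ) + 1) + 1 = -m by ring, h]
    push_cast
    ring_nf

theorem trapSum_add_of_eq_one_or_neg_one (k s : ℤ) (hs : s = 1 ∨ s = -1) :
    trapSum f a dx (k + s) =
      trapSum f a dx k + s * dx * (f (a + k * dx) + f (a + (k + s) * dx)) / 2 := by
  rcases hs with rfl | rfl
  · simpa using trapSum_add_one f a dx k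
  · have h := trapSum_add_one f a dx (k - 1)
    rw [sub_add_cancel, Int.cast_sub, Int.cast_one, sub_add_cancel] at h
    rw [← sub_eq_add_neg, h]
    push_cast
    rw [← sub_eq_add_neg]
    ring

end TrapezoidalSum

section Walk

variable {a dx : ℝ} {X : ℕ → ℤ}

theorem walk_succ (j : ℕ) :
    walk a dx X (j + 1) = walk a dx X j + X j * dx := by
  simp only [walk, sum_range_succ]
  push_cast
  ring

theorem walk_eq_iff (hdx : dx ≠ 0) (j : ℕ) (k : ℤ) :
    walk a dx X j = a + k * dx ↔ ∑ i ∈ range j, X i = k := by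
  rw [walk, add_right_inj, mul_left_inj' hdx, Int.cast_inj]

theorem trapSum_walk (f : ℝ → ℝ) (hX : ∀ r, X r = 1 ∨ X r = -1) (n : ℕ) :
    trapSum f a dx (∑ i ∈ range n, X i) =
      ∑ j ∈ range n, X j * dx * (f (walk a dx X j) + f (walk a dx X (j + 1))) / 2 := by
  induction n with
  | zero => simp [trapSum]
  | succ n ih =>
    rw [sum_range_succ, sum_range_succ, trapSum_add_of_eq_one_or_neg_one f a dx _ _ (hX n), ih]
    simp only [walk, sum_range_succ, Int.cast_add]

theorem locPlus_eq_sum (n : ℕ) (x : ℝ) :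
    locPlus a dx X n x =
      ∑ j ∈ range n, if walk a dx X j = x ∧ walk a dx X (j + 1) = x + dx then dx else 0 := by
  simp [locPlus, sum_ite, mul_comm]

theorem locMinus_eq_sum (n : ℕ) (x : ℝ) :
    locMinus a dx X n x =
      ∑ j ∈ range n, if walk a dx X j = x ∧ walk a dx X (j + 1) = x - dx then dx else 0 := by
  simp [locMinus, sum_ite, mul_comm]

theorem exists_walk_eq_of_locPlus_ne_zero {n : ℕ} {x : ℝ} (h : locPlus a dx X n x ≠ 0) :
    ∃ j ∈ range n, walk a dx X j = x := by
  rw [locPlus_eq_sum] at h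
  obtain ⟨j, hj, hne⟩ := exists_ne_zero_of_sum_ne_zero h
  refine ⟨j, hj, ?_⟩
  by_contra hS
  exact hne (if_neg fun hj' => hS hj'.1)

theorem exists_walk_eq_of_locMinus_ne_zero {n : ℕ} {x : ℝ} (h : locMinus a dx X n x ≠ 0) :
    ∃ j ∈ range n, walk a dx X j = x := by
  rw [locMinus_eq_sum] at h
  obtain ⟨j, hj, hne⟩ := exists_ne_zero_of_sum_ne_zero h
  refine ⟨j, hj, ?_⟩
  by_contra hS
  exact hne (if_neg fun hj' => hS hj'.1)

theorem localTime_term_eq_sum (f : ℝ → ℝ) (hdx : dx ≠ 0) (hX : ∀ r, X r = 1 ∨ X r = -1)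
    (n : ℕ) (k : ℤ) :
    locPlus a dx X n (a + k * dx) * (f (a + k * dx + dx) - f (a + k * dx)) +
        locMinus a dx X n (a + k * dx) * (f (a + k * dx) - f (a + k * dx - dx)) =
      ∑ j ∈ range n, if k = ∑ i ∈ range j, X i then
        X j * dx * (f (walk a dx X (j + 1)) - f (walk a dx X j)) else 0 := by
  rw [locPlus_eq_sum, locMinus_eq_sum, sum_mul, sum_mul, ← sum_add_distrib]
  refine sum_congr rfl fun j _ => ?_
  by_cases hk : k = ∑ i ∈ range j, X i
  · have hS : walk a dx X j = a + k * dx := (walk_eq_iff hdx j k).2 hk.symm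
    have hup_ne_down : a + k * dx + dx ≠ a + k * dx - dx := by
      intro h
      exact hdx (by linarith)
    rw [if_pos hk, walk_succ, hS]
    rcases hX j with h | h
    · simp [h, hup_ne_down]
    · simp [h, hup_ne_down.symm, ← sub_eq_add_neg]
      ring
  · have hS : walk a dx X j ≠ a + k * dx := fun h => hk ((walk_eq_iff hdx j k).1 h).symm
    simp [hk, hS]

theorem tsum_localTime_term_eq_sum (f : ℝ → ℝ) (hdx : dx ≠ 0) (hX : ∀ r, X r = 1 ∨ X r = -1)
    (n : ℕ) :
    ∑' k : ℤ, (locPlus a dx X n (a + k * dx) * (f (a + k * dx + dx) - f (a + k * dx)) +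
        locMinus a dx X n (a + k * dx) * (f (a + k * dx) - f (a + k * dx - dx))) =
      ∑ j ∈ range n, X j * dx * (f (walk a dx X (j + 1)) - f (walk a dx X j)) := by
  simp_rw [localTime_term_eq_sum f hdx hX n]
  rw [Summable.tsum_finsetSum fun j _ => (hasSum_ite_eq _ _).summable]
  simp_rw [tsum_ite_eq]

theorem finite_setOf_localTime_ne_zero (hdx : dx ≠ 0) (n : ℕ) :
    {k : ℤ | locPlus a dx X n (a + k * dx) ≠ 0 ∨ locMinus a dx X n (a + k * dx) ≠ 0}.Finite := by
  refine ((range n).image fun j => ∑ i ∈ range j, X i).finite_toSet.subset fun k hk => ?_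
  obtain ⟨j, hj, hjk⟩ : ∃ j ∈ range n, walk a dx X j = a + k * dx :=
    hk.elim exists_walk_eq_of_locPlus_ne_zero exists_walk_eq_of_locMinus_ne_zero
  exact mem_coe.2 (mem_image.2 ⟨j, hj, (walk_eq_iff hdx j k).1 hjk⟩)

end Walk

theorem discrete_ito_tanaka_general (f : ℝ → ℝ) (a dx : ℝ) (hdx : 0 < dx)
    (X : ℕ → ℤ) (hX : ∀ r, X r = 1 ∨ X r = -1) (n : ℕ) :
    {k : ℤ | locPlus a dx X n (a + (k : ℝ) * dx) ≠ 0 ∨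
        locMinus a dx X n (a + (k : ℝ) * dx) ≠ 0}.Finite ∧
    trapSum f a dx (∑ i ∈ Finset.range n, X i) =
      (∑ r ∈ Finset.range n, f (walk a dx X r) * ((X r : ℝ) * dx)) +
      (1 / 2) * ∑' k : ℤ,
        (locPlus a dx X n (a + (k : ℝ) * dx) *
            (f (a + (k : ℝ) * dx + dx) - f (a + (k : ℝ) * dx)) +
         locMinus a dx X n (a + (k : ℝ) * dx) *
            (f (a + (k : ℝ) * dx) - f (a + (k : ℝ) * dx - dx))) := by
  refine ⟨finite_setOf_localTime_ne_zero hdx.ne' n, ?_⟩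
  rw [tsum_localTime_term_eq_sum f hdx.ne' hX, trapSum_walk f hX, mul_sum, ← sum_add_distrib]
  refine sum_congr rfl fun j _ => ?_
  ring

/-- Discrete Itô–Tanaka formula; the sum over the lattice `a + ℤ Δx` has only
finitely many nonzero terms. -/
theorem discrete_ito_tanaka (f : ℝ → ℝ) (a dx : ℝ) (hdx : 0 < dx)
    (X : ℕ → ℤ) (hX : ∀ r, X r = 1 ∨ X r = -1) (n : ℕ) (hn : 1 ≤ n) :
    {k : ℤ | locPlus a dx X n (a + (k : ℝ) * dx) ≠ 0 ∨
        locMinus a dx X n (a + (k : ℝ) * dx) ≠ 0}.Finite ∧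
    trapSum f a dx (∑ i ∈ Finset.range n, X i) =
      (∑ r ∈ Finset.range n, f (walk a dx X r) * ((X r : ℝ) * dx)) +
      (1 / 2) * ∑' k : ℤ,
        (locPlus a dx X n (a + (k : ℝ) * dx) *
            (f (a + (k : ℝ) * dx + dx) - f (a + (k : ℝ) * dx)) +
         locMinus a dx X n (a + (k : ℝ) * dx) *
            (f (a + (k : ℝ) * dx) - f (a + (k : ℝ) * dx - dx))) :=
  discrete_ito_tanaka_general f a dx hdx X hX n
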